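/- arXiv:1009.0146 — 2 statements merged into one kernel-verified Lean document; each statement's English description precedes it below -/
import Mathlib

section
/- With all p_i > 1 and notation as in the smooth-sequence lemma, suppose G^1_i(l) − G^1_i(l−1) = u^i_l for 3 ≤ i ≤ k−1 and all l ≥ 1, and G^1_k(l) − G^1_k(l−1) = u^k_l for 1 ≤ l ≤ n−1. Let j be the unique integer with k_j ≤ n < k_{j+1}. Then the function t ↦ p_k·G^1_k(n−t) + G^1_{k−1}(t) on 1 ≤ t ≤ n attains its minimum at t = j. -/
/-!
Write `a = u k`, `b = u (k - 1)`, `c = p k`, and let `A x`, `B x` count the terms of `a`, `b`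
that are at most `x`. Splitting off the exponent of `p k` gives `A x = B x + A (x / c)`: the
sequence `a` is the merge of `b` and `c • a`. Hence the greedy matching `K` places `b j` at index
`K j = A ((b j - 1) / c) + j` of `a`. For `f t = c * G1 k (n - t) + G1 (k - 1) t` the difference
hypotheses give `f (t + 1) - f t = b (t + 1) - c * a (n - t)`, and `K j ≤ n < K (j + 1)` makes
this nonpositive for `t < j` and nonnegative for `t ≥ j`, so `f` is smallest at `j`.
-/

/-- `u` (on indices ≥ 1) is a nondecreasing enumeration, with multiplicity,
of all products ∏_{i=3}^{k} p_i^{α_i} with α_i ≥ 0. -/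
def IsSmoothEnum (p : ℕ → ℕ) (k : ℕ) (u : ℕ → ℕ) : Prop :=
  (∀ j, 1 ≤ j → u j ≤ u (j + 1)) ∧
  ∃ e : {j : ℕ // 1 ≤ j} ≃ (Finset.Icc 3 k → ℕ),
    ∀ j : {j : ℕ // 1 ≤ j}, u j.1 = ∏ i : (Finset.Icc 3 k : Finset ℕ), p i.1 ^ e j i

open Finset

noncomputable def smoothCount (p : ℕ → ℕ) (s : Finset ℕ) (x : ℕ) : ℕ :=
  Nat.card {α : s → ℕ // ∏ i : s, p i ^ α i ≤ x}

section SmoothCount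

variable {p : ℕ → ℕ} {s : Finset ℕ}

lemma finite_setOf_prod_pow_le (hp : ∀ i ∈ s, 1 < p i) (x : ℕ) :
    {α : s → ℕ | ∏ i : s, p i ^ α i ≤ x}.Finite := by
  refine (Set.finite_Iic fun _ => x).subset fun α hα i => ?_
  calc α i ≤ p i ^ α i := (Nat.lt_pow_self (hp i i.2)).le
    _ ≤ ∏ j : s, p j ^ α j :=
      single_le_prod' (fun (j : s) _ => Nat.one_le_pow _ _ (Nat.zero_lt_of_lt (hp j j.2)))
        (mem_univ i)
    _ ≤ x := hα

lemma smoothCount_zero (hp : ∀ i ∈ s, 0 < p i) : smoothCount p s 0 = 0 := by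
  have : IsEmpty {α : s → ℕ // ∏ i : s, p i ^ α i ≤ 0} :=
    ⟨fun ⟨α, hα⟩ => (prod_pos fun (i : s) _ => pow_pos (hp i i.2) (α i)).ne' (Nat.le_zero.1 hα)⟩
  exact Nat.card_of_isEmpty

lemma pow_succ_mul_le_iff {c : ℕ} (hc : 0 < c) (m w x : ℕ) :
    c ^ (m + 1) * w ≤ x ↔ c ^ m * w ≤ x / c := by
  rw [Nat.le_div_iff_mul_le hc, pow_succ, mul_right_comm]

def powMulLeEquiv {β : Type*} {c : ℕ} (hc : 0 < c) (w : β → ℕ) (x : ℕ) :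
    {q : ℕ × β // c ^ q.1 * w q.2 ≤ x} ≃
      {g : β // w g ≤ x} ⊕ {q : ℕ × β // c ^ q.1 * w q.2 ≤ x / c} where
  toFun
    | ⟨(0, g), h⟩ => .inl ⟨g, by simpa using h⟩
    | ⟨(m + 1, g), h⟩ => .inr ⟨(m, g), (pow_succ_mul_le_iff hc m _ x).1 h⟩
  invFun
    | .inl ⟨g, h⟩ => ⟨(0, g), by simpa using h⟩
    | .inr ⟨(m, g), h⟩ => ⟨(m + 1, g), (pow_succ_mul_le_iff hc m _ x).2 h⟩
  left_inv := by rintro ⟨⟨_ | m, g⟩, h⟩ <;> rfl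
  right_inv := by rintro (⟨g, h⟩ | ⟨⟨m, g⟩, h⟩) <;> rfl

def insertExponentEquiv {k : ℕ} (hk : k ∉ s) : (↥(insert k s) → ℕ) ≃ ℕ × (s → ℕ) :=
  ((subtypeInsertEquivOption hk).arrowCongr (Equiv.refl ℕ)).trans Equiv.piOptionEquivProd

lemma prod_pow_insert {k : ℕ} (hk : k ∉ s) (α : ↥(insert k s) → ℕ) :
    ∏ i : ↥(insert k s), p i ^ α i =
      p k ^ (insertExponentEquiv hk α).1 * ∏ i : s, p i ^ (insertExponentEquiv hk α).2 i := by
  rw [Fintype.prod_equiv (subtypeInsertEquivOption hk) _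
    (fun o => p ((subtypeInsertEquivOption hk).symm o) ^ α ((subtypeInsertEquivOption hk).symm o))
    (by simp), Fintype.prod_option]
  rfl

lemma smoothCount_insert {k : ℕ} (hk : k ∉ s) (hp : ∀ i ∈ insert k s, 1 < p i) (x : ℕ) :
    smoothCount p (insert k s) x = smoothCount p s x + smoothCount p (insert k s) (x / p k) := by
  have e : ∀ y, {α : ↥(insert k s) → ℕ // ∏ i : ↥(insert k s), p i ^ α i ≤ y} ≃
      {q : ℕ × (s → ℕ) // p k ^ q.1 * ∏ i : s, p i ^ q.2 i ≤ y} := fun y =>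
    (insertExponentEquiv hk).subtypeEquiv fun α => by rw [prod_pow_insert hk]
  have : Finite {α : s → ℕ // ∏ i : s, p i ^ α i ≤ x} :=
    (finite_setOf_prod_pow_le (fun i hi => hp i (mem_insert_of_mem hi)) x).to_subtype
  have : Finite {α : ↥(insert k s) → ℕ // ∏ i : ↥(insert k s), p i ^ α i ≤ x / p k} :=
    (finite_setOf_prod_pow_le hp _).to_subtype
  have : Finite {q : ℕ × (s → ℕ) // p k ^ q.1 * ∏ i : s, p i ^ q.2 i ≤ x / p k} :=
    Finite.of_equiv _ (e _)
  have hpk : 0 < p k := Nat.zero_lt_of_lt (hp k (mem_insert_self k s))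
  rw [smoothCount, Nat.card_congr ((e x).trans
      (powMulLeEquiv hpk (fun α : s → ℕ => ∏ i : s, p i ^ α i) x)),
    Nat.card_sum, ← Nat.card_congr (e _)]
  rfl

lemma smoothCount_Icc_three_eq_add {k : ℕ} (hk : 4 ≤ k) (hp : ∀ i ∈ Icc 3 k, 1 < p i) (x : ℕ) :
    smoothCount p (Icc 3 k) x =
      smoothCount p (Icc 3 (k - 1)) x + smoothCount p (Icc 3 k) (x / p k) := by
  obtain ⟨m, rfl⟩ : ∃ m, k = m + 1 := ⟨k - 1, by omega⟩
  rw [Nat.add_sub_cancel, ← insert_Icc_right_eq_Icc_add_one (by omega)] at *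
  exact smoothCount_insert (by simp) hp x

end SmoothCount

def IsCountingFunction (a A : ℕ → ℕ) : Prop :=
  ∀ x l, 1 ≤ l → (a l ≤ x ↔ l ≤ A x)

namespace IsCountingFunction

variable {a A : ℕ → ℕ} {x l m : ℕ}

lemma le_iff (h : IsCountingFunction a A) (hl : 1 ≤ l) : a l ≤ x ↔ l ≤ A x := h x l hl

lemma lt_iff (h : IsCountingFunction a A) (hl : 1 ≤ l) : x < a l ↔ A x < l := by
  simpa using (h.le_iff hl).not

lemma apply_le_apply (h : IsCountingFunction a A) (hm : 1 ≤ m) (hml : m ≤ l) : a m ≤ a l :=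
  (h.le_iff hm).2 (hml.trans ((h.le_iff (hm.trans hml)).1 le_rfl))

lemma monotone (h : IsCountingFunction a A) : Monotone A := by
  intro x y hxy
  rcases Nat.eq_zero_or_pos (A x) with h0 | hpos
  · simp [h0]
  · exact (h.le_iff hpos).1 (((h.le_iff hpos).2 le_rfl).trans hxy)

lemma pos (h : IsCountingFunction a A) (h0 : A 0 = 0) (hl : 1 ≤ l) : 0 < a l :=
  (h.lt_iff hl).2 (by rw [h0]; exact hl)

end IsCountingFunction

lemma isCountingFunction_ncard {u : ℕ → ℕ} (hu : MonotoneOn u (Set.Ici 1))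
    (hfin : ∀ x, {l | 1 ≤ l ∧ u l ≤ x}.Finite) :
    IsCountingFunction u fun x => {l | 1 ≤ l ∧ u l ≤ x}.ncard := by
  intro x l hl
  dsimp only
  constructor
  · intro hlx
    have hsub : Set.Icc 1 l ⊆ {l | 1 ≤ l ∧ u l ≤ x} := fun m hm =>
      ⟨hm.1, (hu hm.1 (Set.mem_Ici.2 hl) hm.2).trans hlx⟩
    simpa using Set.ncard_le_ncard hsub (hfin x)
  · intro hlc
    by_contra! hxl
    have hsub : {l | 1 ≤ l ∧ u l ≤ x} ⊆ Set.Icc 1 (l - 1) := fun m hm => by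
      refine ⟨hm.1, Nat.le_sub_one_of_lt (lt_of_not_ge fun hlm => ?_)⟩
      exact (hxl.trans_le (hu (Set.mem_Ici.2 hl) (Set.mem_Ici.2 hm.1) hlm)).not_ge hm.2
    have := Set.ncard_le_ncard hsub (Set.finite_Icc _ _)
    simp only [Set.ncard_Icc_nat, add_tsub_cancel_right] at this
    omega

namespace IsSmoothEnum

variable {p : ℕ → ℕ} {k : ℕ} {u : ℕ → ℕ}

lemma monotoneOn (hu : IsSmoothEnum p k u) : MonotoneOn u (Set.Ici 1) :=
  monotoneOn_nat_Ici_of_le_succ hu.1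

lemma isCountingFunction (hp : ∀ i ∈ Icc 3 k, 1 < p i) (hu : IsSmoothEnum p k u) :
    IsCountingFunction u (smoothCount p (Icc 3 k)) := by
  have hmono := hu.monotoneOn
  obtain ⟨-, e, he⟩ := hu
  have eqv : ∀ x, {l // 1 ≤ l ∧ u l ≤ x} ≃
      {α : ↥(Icc 3 k) → ℕ // ∏ i : ↥(Icc 3 k), p i ^ α i ≤ x} := fun x =>
    (Equiv.subtypeSubtypeEquivSubtypeInter (1 ≤ ·) (u · ≤ x)).symm.trans
      (e.subtypeEquiv fun l => by rw [he l])
  have hfin : ∀ x, {l | 1 ≤ l ∧ u l ≤ x}.Finite := fun x =>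
    Set.finite_coe_iff.1
      (@Finite.of_equiv _ _ (finite_setOf_prod_pow_le hp x).to_subtype (eqv x).symm)
  have hcount : smoothCount p (Icc 3 k) = fun x => {l | 1 ≤ l ∧ u l ≤ x}.ncard := by
    funext x
    exact (Nat.card_congr (eqv x)).symm
  exact hcount ▸ isCountingFunction_ncard hmono hfin

lemma apply_one (hp : ∀ i ∈ Icc 3 k, 1 < p i) (hu : IsSmoothEnum p k u) : u 1 = 1 := by
  have hpos := (hu.isCountingFunction hp).pos
    (smoothCount_zero fun i hi => Nat.zero_lt_of_lt (hp i hi)) le_rfl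
  have hmono := hu.monotoneOn
  obtain ⟨-, e, he⟩ := hu
  have hle : u 1 ≤ u (e.symm 0) := hmono (Set.mem_Ici.2 le_rfl) (Set.mem_Ici.2 (e.symm 0).2)
    (e.symm 0).2
  rw [he, e.apply_symm_apply] at hle
  simp only [univ_eq_attach, Pi.zero_apply, pow_zero, prod_const_one] at hle
  omega

end IsSmoothEnum

lemma le_of_succ_le_of_le_succ {β : Type*} [Preorder β] {f : ℕ → β} {j n t : ℕ}
    (hdown : ∀ s, 1 ≤ s → s < j → f (s + 1) ≤ f s) (hup : ∀ s, j ≤ s → s < n → f s ≤ f (s + 1))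
    (ht : 1 ≤ t) (htn : t ≤ n) : f j ≤ f t := by
  rcases le_total t j with htj | hjt
  · refine antitoneOn_of_succ_le Set.ordConnected_Icc (fun s _ hs hs' => ?_)
      ⟨ht, htj⟩ ⟨ht.trans htj, le_rfl⟩ htj
    exact hdown s hs.1 (Order.succ_le_iff.1 hs'.2)
  · refine monotoneOn_of_le_succ Set.ordConnected_Icc (fun s _ hs hs' => ?_)
      ⟨le_rfl, hjt.trans htn⟩ ⟨hjt, htn⟩ hjt
    exact hup s hs.1 (Order.succ_le_iff.1 hs'.2)

section Merge

variable {c : ℕ} {a b A B : ℕ → ℕ}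

lemma greedy_index_eq (hA : IsCountingFunction a A) (hB : IsCountingFunction b B)
    (hrec : ∀ x, A x = B x + A (x / c)) (hA0 : A 0 = 0) (hB0 : B 0 = 0) (hb1 : b 1 = 1)
    {K : ℕ → ℕ} (hK1 : K 1 = 1) (hK : ∀ j, 2 ≤ j → K j = sInf {l | K (j - 1) < l ∧ a l = b j})
    {j : ℕ} (hj : 1 ≤ j) : K j = A ((b j - 1) / c) + j := by
  induction j, hj using Nat.le_induction with
  | base => simp [hK1, hb1, hA0]
  | succ m hm ih =>
    rw [hK (m + 1) (by omega), Nat.add_sub_cancel]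
    generalize hvb : b (m + 1) = v
    have hv : 0 < v := hvb ▸ hB.pos hB0 (by omega)
    have hbm : b m ≤ v := hvb ▸ hB.apply_le_apply hm (by omega)
    have hBv : B (v - 1) < m + 1 := (hB.lt_iff (by omega)).1 (by omega)
    have hA_pred : A (v - 1) = B (v - 1) + A ((v - 1) / c) := hrec _
    have hKm : K m ≤ A ((v - 1) / c) + m := by
      rw [ih]
      have := hA.monotone (Nat.div_le_div_right (c := c) (Nat.sub_le_sub_right hbm 1))
      omega
    refine IsLeast.csInf_eq ⟨⟨by omega, le_antisymm ?_ ?_⟩, ?_⟩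
    · have : m + 1 ≤ B v := (hB.le_iff (by omega)).1 hvb.le
      have : A ((v - 1) / c) ≤ A (v / c) := hA.monotone (Nat.div_le_div_right (by omega))
      exact (hA.le_iff (by omega)).2 (by rw [hrec v]; omega)
    · have : v - 1 < a (A ((v - 1) / c) + (m + 1)) := (hA.lt_iff (by omega)).2 (by omega)
      omega
    · -- the candidate index minus one is `A (v - 1)` if `b m < v`, and `K m` if `b m = v`
      rintro l ⟨hKl, hal⟩
      have hl : A (v - 1) < l := (hA.lt_iff (by omega)).1 (by omega)
      by_cases hbm' : b m < v
      · have : m ≤ B (v - 1) := (hB.le_iff hm).1 (by omega)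
        omega
      · have : b m = v := by omega
        rw [ih, this] at hKl
        omega

lemma le_mul_apply_of_index_le (hA : IsCountingFunction a A) (hB : IsCountingFunction b B)
    (hc : 0 < c) {j n s : ℕ} (hjn : A ((b j - 1) / c) + j ≤ n) (hs : 1 ≤ s) (hsj : s < j) :
    b (s + 1) ≤ c * a (n - s) := by
  have h1 : (b j - 1) / c < a (n - s) := (hA.lt_iff (by omega)).2 (by omega)
  have h2 : b j - 1 < a (n - s) * c := (Nat.div_lt_iff_lt_mul hc).1 h1
  have h3 : b (s + 1) ≤ b j := hB.apply_le_apply (by omega) hsj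
  rw [mul_comm]
  omega

lemma mul_apply_le_of_lt_index (hA : IsCountingFunction a A) (hB : IsCountingFunction b B)
    (hB0 : B 0 = 0) (hc : 0 < c) {j n s : ℕ} (hnj : n < A ((b (j + 1) - 1) / c) + (j + 1))
    (hjs : j ≤ s) (hsn : s < n) : c * a (n - s) ≤ b (s + 1) := by
  have h1 : a (n - s) ≤ (b (j + 1) - 1) / c := (hA.le_iff (by omega)).2 (by omega)
  have h2 : a (n - s) * c ≤ b (j + 1) - 1 := (Nat.le_div_iff_mul_le hc).1 h1
  have h3 : b (j + 1) ≤ b (s + 1) := hB.apply_le_apply (by omega) (by omega)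
  have h4 : 0 < b (j + 1) := hB.pos hB0 (by omega)
  rw [mul_comm]
  omega

lemma min_at_greedy_index (hA : IsCountingFunction a A) (hB : IsCountingFunction b B)
    (hrec : ∀ x, A x = B x + A (x / c)) (hA0 : A 0 = 0) (hB0 : B 0 = 0) (hb1 : b 1 = 1)
    (hc : 0 < c) {K : ℕ → ℕ} (hK1 : K 1 = 1)
    (hK : ∀ j, 2 ≤ j → K j = sInf {l | K (j - 1) < l ∧ a l = b j}) {G H : ℕ → ℕ} {n j : ℕ}
    (hG : ∀ l, 1 ≤ l → l < n → G l = G (l - 1) + a l) (hH : ∀ l, 1 ≤ l → H l = H (l - 1) + b l)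
    (hj : 1 ≤ j) (hj1 : K j ≤ n) (hj2 : n < K (j + 1)) :
    j ≤ n ∧ ∀ t, 1 ≤ t → t ≤ n → c * G (n - j) + H j ≤ c * G (n - t) + H t := by
  rw [greedy_index_eq hA hB hrec hA0 hB0 hb1 hK1 hK hj] at hj1
  rw [greedy_index_eq hA hB hrec hA0 hB0 hb1 hK1 hK (by omega)] at hj2
  have hstep : ∀ s, 1 ≤ s → s < n → c * G (n - s) + H s + b (s + 1) =
      c * G (n - (s + 1)) + H (s + 1) + c * a (n - s) := by
    intro s hs hsn
    rw [hH (s + 1) (by omega), Nat.add_sub_cancel, hG (n - s) (by omega) (by omega),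
      show n - s - 1 = n - (s + 1) by omega]
    ring
  refine ⟨by omega, fun t ht htn => le_of_succ_le_of_le_succ
    (f := fun t => c * G (n - t) + H t) (fun s hs hsj => ?_) (fun s hjs hsn => ?_) ht htn⟩
  · have := le_mul_apply_of_index_le hA hB hc hj1 hs hsj
    have := hstep s hs (by omega)
    omega
  · have := mul_apply_le_of_lt_index hA hB hB0 hc hj2 hjs hsn
    have := hstep s (by omega) hsn
    omega

end Merge

theorem generalized_frame_stewart_min_at_j_general
    (p : ℕ → ℕ) (k : ℕ) (hk : 4 ≤ k)
    (hp : ∀ i, 3 ≤ i → i ≤ k → 1 < p i)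
    (G1 : ℕ → ℕ → ℕ)
    (u : ℕ → ℕ → ℕ)
    (hu : ∀ i, 3 ≤ i → i ≤ k → IsSmoothEnum p i (u i))
    (K : ℕ → ℕ) (hK1 : K 1 = 1)
    (hK : ∀ j, 2 ≤ j → K j = sInf {l | K (j - 1) < l ∧ u k l = u (k - 1) j})
    (n : ℕ)
    (hdiff1 : ∀ i, 3 ≤ i → i ≤ k - 1 → ∀ l, 1 ≤ l → G1 i l - G1 i (l - 1) = u i l)
    (hdiff2 : ∀ l, 1 ≤ l → l ≤ n - 1 → G1 k l - G1 k (l - 1) = u k l)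
    (j : ℕ) (hj : 1 ≤ j) (hj1 : K j ≤ n) (hj2 : n < K (j + 1)) :
    j ≤ n ∧ ∀ t, 1 ≤ t → t ≤ n →
      p k * G1 k (n - j) + G1 (k - 1) j ≤ p k * G1 k (n - t) + G1 (k - 1) t := by
  have hpk : ∀ i ∈ Icc 3 k, 1 < p i := fun i hi => hp i (mem_Icc.1 hi).1 (mem_Icc.1 hi).2
  have hpk' : ∀ i ∈ Icc 3 (k - 1), 1 < p i :=
    fun i hi => hpk i (Icc_subset_Icc_right (Nat.sub_le k 1) hi)
  have hsmooth' := hu (k - 1) (by omega) (Nat.sub_le k 1)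
  have hA := (hu k (by omega) le_rfl).isCountingFunction hpk
  have hB := hsmooth'.isCountingFunction hpk'
  have hA0 := smoothCount_zero fun i hi => Nat.zero_lt_of_lt (hpk i hi)
  have hB0 := smoothCount_zero fun i hi => Nat.zero_lt_of_lt (hpk' i hi)
  refine min_at_greedy_index hA hB (smoothCount_Icc_three_eq_add hk hpk) hA0 hB0
    (hsmooth'.apply_one hpk') (Nat.zero_lt_of_lt (hp k (by omega) le_rfl)) hK1 hK
    (fun l hl hln => ?_) (fun l hl => ?_) hj hj1 hj2
  · have := hdiff2 l hl (by omega)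
    have := hA.pos hA0 hl
    omega
  · have := hdiff1 (k - 1) (by omega) le_rfl l hl
    have := hB.pos hB0 hl
    omega

/-- Lemma 2: under the inductive difference hypotheses, the function
t ↦ p_k·G^1_k(n−t) + G^1_{k−1}(t) on 1 ≤ t ≤ n attains its minimum at t = j,
where j is the integer with k_j ≤ n < k_{j+1}. -/
theorem generalized_frame_stewart_min_at_j
    (p : ℕ → ℕ) (k : ℕ) (hk : 4 ≤ k)
    (hp : ∀ i, 3 ≤ i → i ≤ k → 1 < p i)
    (G1 : ℕ → ℕ → ℕ)
    (hG10 : ∀ k', G1 k' 0 = 0)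
    (hG13 : ∀ n, 1 ≤ n → G1 3 n = p 3 * G1 3 (n - 1) + 1)
    (hG1k : ∀ k', 4 ≤ k' → ∀ n, 1 ≤ n →
      G1 k' n = sInf {v | ∃ t, 1 ≤ t ∧ t ≤ n ∧ v = p k' * G1 k' (n - t) + G1 (k' - 1) t})
    (u : ℕ → ℕ → ℕ)
    (hu : ∀ i, 3 ≤ i → i ≤ k → IsSmoothEnum p i (u i))
    (K : ℕ → ℕ) (hK1 : K 1 = 1)
    (hK : ∀ j, 2 ≤ j → K j = sInf {l | K (j - 1) < l ∧ u k l = u (k - 1) j})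
    (n : ℕ) (hn : 1 ≤ n)
    (hdiff1 : ∀ i, 3 ≤ i → i ≤ k - 1 → ∀ l, 1 ≤ l → G1 i l - G1 i (l - 1) = u i l)
    (hdiff2 : ∀ l, 1 ≤ l → l ≤ n - 1 → G1 k l - G1 k (l - 1) = u k l)
    (j : ℕ) (hj : 1 ≤ j) (hj1 : K j ≤ n) (hj2 : n < K (j + 1)) :
    j ≤ n ∧ ∀ t, 1 ≤ t → t ≤ n →
      p k * G1 k (n - j) + G1 (k - 1) j ≤ p k * G1 k (n - t) + G1 (k - 1) t :=
  generalized_frame_stewart_min_at_j_general p k hk hp G1 u hu K hK1 hK n hdiff1 hdiff2 j hj hj1 hj2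
end

section
/- Let p ≥ 1 and suppose p_i = p for all 3 ≤ i ≤ k. Then for all integers j ≥ 0 and n ≥ 1 with binom(k+j−3, k−2) < n ≤ binom(k+j−2, k−2), the generalized Frame-Stewart number with unit q-weights satisfies G^1_k(n) = Σ_{m=0}^{j−1} binom(k+m−3, k−3)·p^m + (n − binom(k+j−3, k−2))·p^j. -/
/-!
Write `cost p k n` for the sum of the `n` smallest weights of a multiset in which `p ^ j` occurs
`(k + j - 3).choose (k - 3)` times. Expanding every weight as `p ^ e = 1 + ∑_{j < e} p ^ j (p - 1)`
turns both `cost p k n` and `p * cost p k (n - t) + cost p (k - 1) t` into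
`n + ∑_j p ^ j (p - 1) * #(disks of level > j)`, and Pascal's rule compares these counts level by
level. The comparison is an inequality for every split `t` and an equality when `t` cuts `n` along
its block, so `cost` satisfies the defining recurrence of `G^1_k` and hence equals it. Summing over
complete blocks gives the closed form.
-/

open Finset

theorem pow_eq_one_add_sum_pow_mul {p : ℕ} (hp : 1 ≤ p) (e : ℕ) :
    p ^ e = 1 + ∑ j ∈ range e, p ^ j * (p - 1) := by
  rw [← sum_mul, geom_sum_mul_of_one_le hp, Nat.add_sub_cancel' (Nat.one_le_pow _ _ hp)]

theorem sum_pow_eq_add_sum_mul_sub {p : ℕ} (hp : 1 ≤ p) {e T : ℕ → ℕ}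
    (he : ∀ i j, j < e i ↔ T j ≤ i) {n B : ℕ} (hB : ∀ i < n, e i ≤ B) :
    ∑ i ∈ range n, p ^ e i = n + ∑ j ∈ range B, p ^ j * (p - 1) * (n - T j) := by
  have hterm : ∀ i ∈ range n,
      p ^ e i = 1 + ∑ j ∈ range B, if j < e i then p ^ j * (p - 1) else 0 := by
    intro i hi
    rw [← sum_filter, pow_eq_one_add_sum_pow_mul hp]
    congr 2
    ext j
    simp only [mem_filter, mem_range]
    have := hB i (mem_range.1 hi)
    omega
  have hcount : ∀ j, #{i ∈ range n | j < e i} = n - T j := by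
    intro j
    simp only [he, range_eq_Ico, Ico_filter_le, Nat.card_Ico]
    omega
  rw [sum_congr rfl hterm, sum_add_distrib, sum_comm]
  simp only [← sum_filter, sum_const, card_range, smul_eq_mul, mul_one, hcount, mul_comm (n - _)]

namespace FrameStewart

/-- The disks `i` with `blockStart k j < i ≤ blockStart k (j + 1)` form block `j`; each of them
costs `p ^ j`, and `level k i` is the block of disk `i` (disks are numbered from `1`). -/
def blockStart (k j : ℕ) : ℕ := (k + j - 3).choose (k - 2)

noncomputable def level (k i : ℕ) : ℕ := sInf {j | i ≤ blockStart k (j + 1)}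

noncomputable def cost (p k n : ℕ) : ℕ := ∑ i ∈ range n, p ^ level k (i + 1)

variable {p k : ℕ}

theorem blockStart_zero (hk : 3 ≤ k) : blockStart k 0 = 0 :=
  Nat.choose_eq_zero_of_lt (by omega)

theorem blockStart_succ (hk : 3 ≤ k) (j : ℕ) :
    blockStart k (j + 1) = blockStart k j + (k + j - 3).choose (k - 3) := by
  rw [blockStart, blockStart, show k + (j + 1) - 3 = k + j - 3 + 1 by omega,
    show k - 2 = k - 3 + 1 by omega, Nat.choose_succ_succ', add_comm]

theorem blockStart_succ_succ (hk : 3 ≤ k) (j : ℕ) :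
    blockStart (k + 1) (j + 1) = blockStart (k + 1) j + blockStart k (j + 1) := by
  rw [blockStart_succ (by omega), blockStart, show k + 1 + j - 3 = k + (j + 1) - 3 by omega]
  rfl

theorem strictMono_blockStart (hk : 3 ≤ k) : StrictMono (blockStart k) :=
  strictMono_nat_of_lt_succ fun j => by
    rw [blockStart_succ hk]
    exact Nat.lt_add_of_pos_right (Nat.choose_pos (by omega))

theorem level_lt_iff (hk : 3 ≤ k) {i : ℕ} (hi : 1 ≤ i) (j : ℕ) :
    level k i < j ↔ i ≤ blockStart k j := by
  cases j with
  | zero => rw [blockStart_zero hk]; omega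
  | succ j =>
    rw [Nat.lt_add_one_iff]
    refine ⟨fun h => ?_, fun h => Nat.sInf_le h⟩
    have hne : {j | i ≤ blockStart k (j + 1)}.Nonempty :=
      ⟨i, (strictMono_blockStart hk).le_apply.trans' (by omega)⟩
    exact (Nat.sInf_mem hne).trans ((strictMono_blockStart hk).monotone (Nat.succ_le_succ h))

theorem level_eq (hk : 3 ≤ k) {i j : ℕ} (h1 : blockStart k j < i)
    (h2 : i ≤ blockStart k (j + 1)) : level k i = j := by
  have hi : 1 ≤ i := by omega
  exact le_antisymm (Nat.lt_add_one_iff.1 ((level_lt_iff hk hi _).2 h2))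
    (not_lt.1 ((level_lt_iff hk hi _).not.2 (not_le.2 h1)))

theorem level_succ_le (hk : 3 ≤ k) (i : ℕ) : level k (i + 1) ≤ i :=
  Nat.lt_add_one_iff.1 <| (level_lt_iff hk (by omega) _).2 (strictMono_blockStart hk).le_apply

theorem cost_zero : cost p k 0 = 0 := rfl

theorem cost_eq_add_sum (hp : 1 ≤ p) (hk : 3 ≤ k) {m n : ℕ} (hmn : m ≤ n) :
    cost p k m = m + ∑ j ∈ range n, p ^ j * (p - 1) * (m - blockStart k (j + 1)) :=
  sum_pow_eq_add_sum_mul_sub hp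
    (fun i j => by rw [← not_le, ← Nat.lt_add_one_iff, level_lt_iff hk (by omega)]; omega)
    fun i hi => by have := level_succ_le hk i; omega

theorem mul_cost_eq_add_sum (hp : 1 ≤ p) (hk : 3 ≤ k) {m n : ℕ} (hmn : m ≤ n) :
    p * cost p k m = m + ∑ j ∈ range n, p ^ j * (p - 1) * (m - blockStart k j) := by
  rw [cost, mul_sum]
  simp only [← pow_succ']
  exact sum_pow_eq_add_sum_mul_sub hp
    (fun i j => by rw [Nat.lt_add_one_iff, ← not_lt, level_lt_iff hk (by omega)]; omega)
    fun i hi => by have := level_succ_le hk i; omega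

theorem mul_cost_add_cost_eq_add_sum (hp : 1 ≤ p) (hk : 3 ≤ k) {n t : ℕ} (ht : t ≤ n) :
    p * cost p (k + 1) (n - t) + cost p k t = n + ∑ j ∈ range n, p ^ j * (p - 1) *
      ((n - t - blockStart (k + 1) j) + (t - blockStart k (j + 1))) := by
  rw [mul_cost_eq_add_sum hp (by omega) (Nat.sub_le n t), cost_eq_add_sum hp hk ht]
  simp only [mul_add, sum_add_distrib]
  omega

theorem cost_le (hp : 1 ≤ p) (hk : 3 ≤ k) {n t : ℕ} (ht : t ≤ n) :
    cost p (k + 1) n ≤ p * cost p (k + 1) (n - t) + cost p k t := by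
  rw [mul_cost_add_cost_eq_add_sum hp hk ht, cost_eq_add_sum hp (by omega) le_rfl]
  gcongr with j
  rw [blockStart_succ_succ hk]
  omega

theorem exists_blockStart_lt_le (hk : 3 ≤ k) {n : ℕ} (hn : 1 ≤ n) :
    ∃ j, blockStart k j < n ∧ n ≤ blockStart k (j + 1) :=
  ⟨level k n, not_le.1 <| (level_lt_iff hk hn _).not.1 (lt_irrefl _),
    (level_lt_iff hk hn _).1 (Nat.lt_add_one _)⟩

theorem exists_cost_eq (hp : 1 ≤ p) (hk : 3 ≤ k) {n : ℕ} (hn : 1 ≤ n) :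
    ∃ t, 1 ≤ t ∧ t ≤ n ∧ cost p (k + 1) n = p * cost p (k + 1) (n - t) + cost p k t := by
  obtain ⟨j, hlo, hhi⟩ := exists_blockStart_lt_le (k := k + 1) (by omega) hn
  have hmono_succ := (strictMono_blockStart (k := k + 1) (by omega)).monotone
  have hmono := (strictMono_blockStart hk).monotone
  refine ⟨n - min (n - blockStart k j) (blockStart (k + 1) j), by omega, Nat.sub_le _ _, ?_⟩
  rw [mul_cost_add_cost_eq_add_sum hp hk (Nat.sub_le _ _), cost_eq_add_sum hp (by omega) le_rfl]
  -- With `x = n - t`, `(x - a) + (t - b) = n - (a + b)` needs `a ≤ x ∧ b ≤ t` or `x ≤ a ∧ t ≤ b`: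
  -- the first holds at the levels `J < j`, the second at the levels `J ≥ j`.
  refine congrArg _ (sum_congr rfl fun J _ => congrArg _ ?_)
  have := blockStart_succ_succ hk J
  rcases Nat.lt_or_ge J j with hJ | hJ
  · obtain ⟨j, rfl⟩ : ∃ j', j = j' + 1 := ⟨j - 1, by omega⟩
    have := blockStart_succ_succ hk j
    have : blockStart (k + 1) J ≤ blockStart (k + 1) j := hmono_succ (by omega)
    have : blockStart k (J + 1) ≤ blockStart k (j + 1) := hmono hJ
    omega
  · have := blockStart_succ_succ hk j
    have : blockStart (k + 1) j ≤ blockStart (k + 1) J := hmono_succ hJ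
    have : blockStart k (j + 1) ≤ blockStart k (J + 1) := hmono (by omega)
    have : blockStart k j ≤ blockStart k (j + 1) := hmono (by omega)
    omega

theorem cost_add (hk : 3 ≤ k) {j m d : ℕ} (hm : blockStart k j ≤ m)
    (hmd : m + d ≤ blockStart k (j + 1)) : cost p k (m + d) = cost p k m + d * p ^ j := by
  have hlevel : ∀ x ∈ range d, p ^ level k (m + x + 1) = p ^ j := fun x hx => by
    rw [level_eq hk (j := j) (by omega) (by rw [mem_range] at hx; omega)]
  rw [cost, sum_range_add, sum_congr rfl hlevel, sum_const, card_range, smul_eq_mul, cost]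

theorem cost_blockStart (hk : 3 ≤ k) (j : ℕ) :
    cost p k (blockStart k j) = ∑ i ∈ range j, (k + i - 3).choose (k - 3) * p ^ i := by
  induction j with
  | zero => rw [blockStart_zero hk, sum_range_zero, cost_zero]
  | succ j ih =>
    rw [blockStart_succ hk, cost_add hk le_rfl (blockStart_succ hk j).ge, ih, sum_range_succ]

theorem cost_three_eq_geom_sum (n : ℕ) : cost p 3 n = ∑ i ∈ range n, p ^ i :=
  sum_congr rfl fun i _ => by
    rw [level_eq le_rfl (j := i) (by simp [blockStart]) (by simp [blockStart])]

theorem eq_cost_of_recurrence (hp : 1 ≤ p) (G : ℕ → ℕ → ℕ) (hG0 : ∀ k, G k 0 = 0)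
    (hG3 : ∀ n, 1 ≤ n → G 3 n = p * G 3 (n - 1) + 1)
    (hG : ∀ k, 4 ≤ k → ∀ n, 1 ≤ n →
      G k n = sInf {v | ∃ t, 1 ≤ t ∧ t ≤ n ∧ v = p * G k (n - t) + G (k - 1) t})
    (hk : 3 ≤ k) (n : ℕ) : G k n = cost p k n := by
  induction k, hk using Nat.le_induction generalizing n with
  | base =>
    induction n with
    | zero => rw [hG0, cost_zero]
    | succ n ih => rw [hG3 _ (by omega), Nat.add_sub_cancel, ih, cost_three_eq_geom_sum,
        cost_three_eq_geom_sum, geom_sum_succ]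
  | succ k hk ih =>
    induction n using Nat.strong_induction_on with
    | _ n ihn =>
    rcases Nat.eq_zero_or_pos n with rfl | hn
    · rw [hG0, cost_zero]
    rw [hG (k + 1) (by omega) n hn, Nat.add_sub_cancel]
    refine IsLeast.csInf_eq ⟨?_, ?_⟩
    · obtain ⟨t, ht1, htn, heq⟩ := exists_cost_eq hp hk hn
      exact ⟨t, ht1, htn, by rw [ihn _ (by omega), ih, heq]⟩
    · rintro _ ⟨t, ht1, htn, rfl⟩
      rw [ihn _ (by omega), ih]
      exact cost_le hp hk htn

end FrameStewart

theorem generalized_frame_stewart_constant_p_formula_general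
    (p : ℕ) (hp : 1 ≤ p) (k : ℕ) (hk : 3 ≤ k)
    (G1 : ℕ → ℕ → ℕ)
    (hG10 : ∀ k', G1 k' 0 = 0)
    (hG13 : ∀ n, 1 ≤ n → G1 3 n = p * G1 3 (n - 1) + 1)
    (hG1k : ∀ k', 4 ≤ k' → ∀ n, 1 ≤ n →
      G1 k' n = sInf {v | ∃ t, 1 ≤ t ∧ t ≤ n ∧ v = p * G1 k' (n - t) + G1 (k' - 1) t})
    (j n : ℕ)
    (h1 : (k + j - 3).choose (k - 2) < n) (h2 : n ≤ (k + j - 2).choose (k - 2)) :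
    G1 k n = (∑ m ∈ Finset.range j, (k + m - 3).choose (k - 3) * p ^ m)
      + (n - (k + j - 3).choose (k - 2)) * p ^ j := by
  have hstart : FrameStewart.blockStart k j < n := h1
  have hend : n ≤ FrameStewart.blockStart k (j + 1) := by
    rwa [FrameStewart.blockStart, show k + (j + 1) - 3 = k + j - 2 by omega]
  obtain ⟨d, rfl⟩ := Nat.exists_eq_add_of_le hstart.le
  rw [FrameStewart.eq_cost_of_recurrence hp G1 hG10 hG13 hG1k hk,
    FrameStewart.cost_add hk le_rfl hend, FrameStewart.cost_blockStart hk,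
    show (k + j - 3).choose (k - 2) = FrameStewart.blockStart k j from rfl, Nat.add_sub_cancel_left]

/-- For constant p_i = p, the generalized Frame–Stewart number with unit q-weights
has the closed form G^1_k(n) = Σ_{m<j} binom(k+m−3,k−3)·p^m + (n − binom(k+j−3,k−2))·p^j. -/
theorem generalized_frame_stewart_constant_p_formula
    (p : ℕ) (hp : 1 ≤ p) (k : ℕ) (hk : 3 ≤ k)
    (G1 : ℕ → ℕ → ℕ)
    (hG10 : ∀ k', G1 k' 0 = 0)
    (hG13 : ∀ n, 1 ≤ n → G1 3 n = p * G1 3 (n - 1) + 1)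
    (hG1k : ∀ k', 4 ≤ k' → ∀ n, 1 ≤ n →
      G1 k' n = sInf {v | ∃ t, 1 ≤ t ∧ t ≤ n ∧ v = p * G1 k' (n - t) + G1 (k' - 1) t})
    (j n : ℕ) (hn : 1 ≤ n)
    (h1 : (k + j - 3).choose (k - 2) < n) (h2 : n ≤ (k + j - 2).choose (k - 2)) :
    G1 k n = (∑ m ∈ Finset.range j, (k + m - 3).choose (k - 3) * p ^ m)
      + (n - (k + j - 3).choose (k - 2)) * p ^ j :=
  generalized_frame_stewart_constant_p_formula_general p hp k hk G1 hG10 hG13 hG1k j n h1 h2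
end
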